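/- Let R be an Ore domain with quotient field K. Suppose W is an R-module of rank 2m (i.e., dim_K(W ⊗_R K) = 2m) equipped with an R-sesquilinear form λ : W → W^* := Hom_R(W, R), and there exist elements ℓ₁,…,ℓ_m, d₁,…,d_m ∈ W with λ(ℓ_i)(ℓ_j) = 0 and λ(ℓ_i)(d_j) = δ_{ij}. Then the map W^* → (R^{2m})^* given by restriction to the submodule generated by the ℓ's and d's is surjective with torsion-free kernel; consequently W ≅ (free module of rank 2m) ⊕ T(W) where T(W) is the torsion submodule, provided λ is surjective onto W^*. -/

import Mathlib

/-!
The Gram matrix `[[0, I], [I, X]]` of `λ` on `v = Sum.elim ℓ d` is invertible, so applying its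
inverse to `λ ∘ v` yields functionals `e` biorthogonal to `v`. Hence restriction along `v` is onto,
and `q = (e s)ₛ : W → R^{2m}` is a surjection split by `f ↦ ∑ f s • v s`. Its kernel has rank
`rank W - 2m = 0`, so it is torsion, and it contains `T(W)` because `R^{2m}` is torsion-free;
therefore `W ≅ R^{2m} × T(W)`. The kernel statement holds because duals over a domain are
torsion-free.
-/
open scoped TensorProduct

theorem Module.rank_eq_of_finrank_baseChange_eq {R : Type*} [CommRing R] [IsDomain R]
    (K : Type*) [Field K] [Algebra R K] [IsFractionRing R K]
    {W : Type*} [AddCommGroup W] [Module R W] [Module.Finite R W] {n : ℕ}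
    (h : Module.finrank K (K ⊗[R] W) = n) : Module.rank R W = n := by
  rw [← Module.finrank_eq_rank, ← (TensorProduct.isBaseChange R W K).finrank_eq, h]

section Torsion

open Module

variable {R M F : Type*} [CommRing R] [AddCommGroup M] [Module R M] [AddCommGroup F] [Module R F]

theorem LinearMap.isTorsion_ker_of_surjective_of_rank_eq [IsDomain R] {q : M →ₗ[R] F}
    (hq : Function.Surjective q) {n : ℕ} (hM : Module.rank R M = n) (hF : Module.rank R F = n) :
    IsTorsion R (LinearMap.ker q) := by
  have h := LinearMap.lift_rank_eq_of_surjective hq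
  rw [hM, hF, Cardinal.lift_natCast, Cardinal.lift_natCast, eq_comm,
    Cardinal.add_eq_left_iff] at h
  rcases h with h | h
  · exact absurd ((le_max_left _ _).trans h) Cardinal.natCast_lt_aleph0.not_ge
  · rwa [Cardinal.lift_eq_zero, Module.rank_eq_zero_iff_isTorsion] at h

theorem LinearMap.ker_eq_torsion_of_isTorsion [IsTorsionFree R F] {q : M →ₗ[R] F}
    (h : IsTorsion R (LinearMap.ker q)) : LinearMap.ker q = Submodule.torsion R M := by
  refine le_antisymm (fun x hx => ?_) (fun x hx => ?_)
  · obtain ⟨a, ha⟩ := @h ⟨x, hx⟩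
    exact ⟨a, congrArg Subtype.val ha⟩
  · obtain ⟨a, ha⟩ := hx
    have hreg : IsSMulRegular F (a : R) :=
      IsTorsionFree.isSMulRegular (isRegular_iff_mem_nonZeroDivisors.mpr a.2)
    exact hreg.right_eq_zero_of_smul (by rw [← map_smul, ← Submonoid.smul_def, ha, map_zero])

theorem nonempty_linearEquiv_prod_torsion_of_comp_eq_id {q : M →ₗ[R] F} {s : F →ₗ[R] M}
    (hs : q ∘ₗ s = LinearMap.id) (hker : LinearMap.ker q = Submodule.torsion R M) :
    Nonempty (M ≃ₗ[R] F × Submodule.torsion R M) := by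
  have hexact : Function.Exact (Submodule.torsion R M).subtype q := by
    rw [LinearMap.exact_iff, hker, Submodule.range_subtype]
  exact ⟨(hexact.splitSurjectiveEquiv (Submodule.injective_subtype _) ⟨s, hs⟩).1.trans
    (LinearEquiv.prodComm R _ _)⟩

end Torsion

section Biorthogonal

variable {R W ι : Type*} [CommRing R] [AddCommGroup W] [Module R W] [Fintype ι] [DecidableEq ι]
  {v : ι → W} {e : ι → Module.Dual R W} (he : ∀ s t, e s (v t) = if s = t then 1 else 0)
include he

theorem surjective_restrict_of_biorthogonal :
    Function.Surjective (fun φ : Module.Dual R W => fun s => φ (v s)) := fun f =>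
  ⟨∑ s, f s • e s, funext fun t => by simp [he]⟩

theorem pi_comp_linearCombination_of_biorthogonal :
    LinearMap.pi e ∘ₗ Fintype.linearCombination R v = LinearMap.id := by
  ext f t
  simp [Fintype.linearCombination_apply, he, Pi.single_apply]

end Biorthogonal

section Lagrangian

variable {R W ι : Type*} [CommRing R] [AddCommGroup W] [Module R W] [Fintype ι]

/-- The functionals `G⁻¹ (λ ∘ Sum.elim ℓ d)`, where `G = [[0, I], [I, X]]` with `X = (λ dᵢ dⱼ)` is
the Gram matrix of `λ` on `Sum.elim ℓ d`, so that `G⁻¹ = [[-X, I], [I, 0]]`. -/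
def lagrangianDual (lam : W →ₗ[R] Module.Dual R W) (ℓ d : ι → W) : ι ⊕ ι → Module.Dual R W :=
  Sum.elim (fun i => lam (d i) - ∑ j, lam (d i) (d j) • lam (ℓ j)) (fun i => lam (ℓ i))

theorem lagrangianDual_apply_sumElim [DecidableEq ι] {lam : W →ₗ[R] Module.Dual R W} {ℓ d : ι → W}
    (hll : ∀ i j, lam (ℓ i) (ℓ j) = 0)
    (hld : ∀ i j, lam (ℓ i) (d j) = if i = j then 1 else 0)
    (hdl : ∀ i j, lam (d i) (ℓ j) = if i = j then 1 else 0) (s t : ι ⊕ ι) :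
    lagrangianDual lam ℓ d s (Sum.elim ℓ d t) = if s = t then 1 else 0 := by
  rcases s with i | i <;> rcases t with j | j <;>
    simp [lagrangianDual, hll, hld, hdl, mul_ite, Finset.sum_ite_eq']

end Lagrangian

/-- Let `R` be a domain with quotient field `K`, and `W` a finitely generated
`R`-module of rank `2m` (i.e. `dim_K (K ⊗_R W) = 2m`) with a form
`λ : W → W^* = Hom_R(W,R)` admitting a Lagrangian family `ℓ₁,…,ℓ_m` with duals
`d₁,…,d_m` (`λ(ℓᵢ)(ℓⱼ) = 0`, `λ(ℓᵢ)(dⱼ) = δᵢⱼ = λ(dᵢ)(ℓⱼ)`).  Then restriction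
to the submodule generated by the `ℓ`'s and `d`'s gives a surjection
`W^* → (R^{2m})^*` whose kernel is torsion-free; consequently, if `λ` is
surjective onto `W^*`, then `W` is isomorphic to the direct sum of a free module
of rank `2m` and its torsion submodule `T(W)`. -/
theorem stmt_11 (R : Type*) [CommRing R] [IsDomain R]
    (K : Type*) [Field K] [Algebra R K] [IsFractionRing R K]
    (W : Type*) [AddCommGroup W] [Module R W] [Module.Finite R W]
    (m : ℕ) (hrank : Module.finrank K (K ⊗[R] W) = 2 * m)
    (lam : W →ₗ[R] Module.Dual R W) (ℓ d : Fin m → W)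
    (hll : ∀ i j, lam (ℓ i) (ℓ j) = 0)
    (hld : ∀ i j, lam (ℓ i) (d j) = if i = j then 1 else 0)
    (hdl : ∀ i j, lam (d i) (ℓ j) = if i = j then 1 else 0) :
    (Function.Surjective
      (fun φ : Module.Dual R W => fun s : Fin m ⊕ Fin m => φ (Sum.elim ℓ d s))) ∧
    (∀ φ : Module.Dual R W, (∀ s : Fin m ⊕ Fin m, φ (Sum.elim ℓ d s) = 0) →
      (∃ r : R, r ≠ 0 ∧ r • φ = 0) → φ = 0) ∧
    (Function.Surjective lam →
      Nonempty (W ≃ₗ[R] ((Fin m ⊕ Fin m) → R) × ↥(Submodule.torsion R W))) := by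
  have he := lagrangianDual_apply_sumElim hll hld hdl
  refine ⟨surjective_restrict_of_biorthogonal he, ?_, fun _ => ?_⟩
  · rintro φ - ⟨r, hr, hrφ⟩
    exact (smul_eq_zero.mp hrφ).resolve_left hr
  · have hsplit := pi_comp_linearCombination_of_biorthogonal he
    have hW : Module.rank R W = (2 * m : ℕ) := Module.rank_eq_of_finrank_baseChange_eq K hrank
    have hF : Module.rank R (Fin m ⊕ Fin m → R) = (2 * m : ℕ) := by simp [two_mul]
    have hker := LinearMap.ker_eq_torsion_of_isTorsion <|
      LinearMap.isTorsion_ker_of_surjective_of_rank_eq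
        (LinearMap.surjective_of_comp_eq_id _ _ hsplit) hW hF
    exact nonempty_linearEquiv_prod_torsion_of_comp_eq_id hsplit hker
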